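/- Let p ≥ 2 and ν ∈ ℚ_{<0}. In the field H_{ℂ(λ)} of Hahn series over ℂ(λ) with value group ℚ, the unique solution g_2(λ, z) of the equation (λφ_p − z^ν)∘h(z)^{−1}∘(λφ_p − 1)(g_2) = z^ν·z^{ν/(p−1)}·(λ−1)², where h(z) = 1 + z^{−ν/(p−1)}, is g_2(λ, z) = 1 + (λ−1)·Σ_{k ≤ −1} λ^k z^{p^k ν/(p−1)}. -/

import Mathlib

/-! With `c = ν / (p - 1)` the series `S` telescopes, `λ φ_p(S) - S = z ^ c`, hence
`(λ φ_p - 1) g₂ = (λ - 1)(1 + z ^ c) = h · (λ - 1) z ^ c`, and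
`(λ φ_p - z ^ ν)((λ - 1) z ^ c) = (λ - 1)² z ^ (ν + c)` since `p c = ν + c`.
Uniqueness holds because `u ↦ t φ_q(u) - z ^ ν u` is injective for `q > 1` and `t ≠ 0, 1`. -/

open HahnSeries

theorem RatFunc.X_ne_one {F : Type*} [Field F] : (RatFunc.X : RatFunc F) ≠ 1 := fun h => by
  simpa using congrArg RatFunc.intDegree h

theorem HahnSeries.smul_single {Γ R : Type*} [PartialOrder Γ] [Semiring R] (r : R) (a : Γ)
    (s : R) : r • single a s = single a (r * s) := by
  ext b
  by_cases hb : b = a <;> simp [hb]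

theorem HahnSeries.one_add_single_ne_zero {Γ R : Type*} [Zero Γ] [PartialOrder Γ] [Semiring R]
    [Nontrivial R] {a : Γ} (ha : a ≠ 0) {r : R} : 1 + single a r ≠ 0 := fun h => by
  simpa [coeff_single, Ne.symm ha] using congrArg (coeff · 0) h

theorem HahnSeries.one_add_single_neg_mul_single {Γ R : Type*} [AddCommGroup Γ]
    [PartialOrder Γ] [IsOrderedCancelAddMonoid Γ] [CommSemiring R] (a : Γ) (r : R) :
    (1 + single (-a) 1) * single a r = r • (1 + single a 1) := by
  rw [add_mul, one_mul, single_mul_single, neg_add_cancel, one_mul, smul_add, smul_single,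
    mul_one, add_comm, ← single_zero_one, smul_single, mul_one]

variable {Γ K : Type*} [Field Γ] [LinearOrder Γ] [Field K]

/-- `φ` substitutes `z ^ q` for `z`. -/
def IsExponentRescaling (q : Γ) (φ : HahnSeries Γ K → HahnSeries Γ K) : Prop :=
  ∀ f γ, (φ f).coeff γ = f.coeff (γ / q)

namespace IsExponentRescaling

variable {q : Γ} {φ : HahnSeries Γ K → HahnSeries Γ K}

theorem map_add (hφ : IsExponentRescaling q φ) (x y : HahnSeries Γ K) :
    φ (x + y) = φ x + φ y := by
  ext γ
  simp only [hφ _, coeff_add]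

theorem map_sub (hφ : IsExponentRescaling q φ) (x y : HahnSeries Γ K) :
    φ (x - y) = φ x - φ y := by
  ext γ
  simp only [hφ _, coeff_sub]

theorem map_smul (hφ : IsExponentRescaling q φ) (r : K) (x : HahnSeries Γ K) :
    φ (r • x) = r • φ x := by
  ext γ
  simp only [hφ _, HahnSeries.coeff_smul]

theorem map_single (hφ : IsExponentRescaling q φ) (hq : q ≠ 0) (a : Γ) (r : K) :
    φ (single a r) = single (q * a) r := by
  ext γ
  simp [hφ _, coeff_single, div_eq_iff hq, mul_comm a]

theorem map_one (hφ : IsExponentRescaling q φ) (hq : q ≠ 0) : φ 1 = 1 := by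
  rw [← single_zero_one, hφ.map_single hq, mul_zero]

variable [IsStrictOrderedRing Γ]

theorem smul_map_one_add_smul (hφ : IsExponentRescaling q φ) (hq : q ≠ 0) (t : K)
    (S : HahnSeries Γ K) :
    t • φ (1 + (t - 1) • S) - (1 + (t - 1) • S) = (t - 1) • (1 + (t • φ S - S)) := by
  simp only [hφ.map_add, hφ.map_smul, hφ.map_one hq]
  module

theorem smul_map_single_sub_single_mul_single (hφ : IsExponentRescaling q φ) (hq : q ≠ 0)
    {a ν : Γ} (ha : q * a = ν + a) (t r : K) :
    t • φ (single a r) - single ν 1 * single a r = single (ν + a) ((t - 1) * r) := by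
  rw [hφ.map_single hq, smul_single, single_mul_single, one_mul, ha, ← single_sub, sub_mul,
    one_mul]

/-- The lowest exponent `a` of a solution forces `a ≤ (a + ν) / q` and `a ≤ q a - ν`, so `a` is
the fixed point `ν / (q - 1)` of `b ↦ (b + ν) / q`, where the equation reads `u_a = c u_a`. -/
theorem eq_zero_of_smul_eq_single_mul (hφ : IsExponentRescaling q φ) (hq : 1 < q) {c : K}
    (hc₀ : c ≠ 0) (hc₁ : c ≠ 1) {ν : Γ} {u : HahnSeries Γ K}
    (hu : c • φ u = single ν 1 * u) : u = 0 := by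
  have hcoeff : ∀ b, u.coeff b = c * u.coeff ((b + ν) / q) := fun b => by
    simpa [hφ _, coeff_single_mul_add] using (congrArg (coeff · (b + ν)) hu).symm
  by_contra hu₀
  have hq₀ : 0 < q := zero_lt_one.trans hq
  set a := u.order
  have ha : u.coeff a ≠ 0 := fun h => hu₀ (coeff_order_eq_zero.mp h)
  have h₁ : a ≤ (a + ν) / q :=
    order_le_of_coeff_ne_zero fun h => ha (by rw [hcoeff, h, mul_zero])
  have h₂ : a ≤ q * a - ν := order_le_of_coeff_ne_zero <| by
    rw [hcoeff, show (q * a - ν + ν) / q = a by field_simp; ring]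
    exact mul_ne_zero hc₀ ha
  have hfix : (a + ν) / q = a := by
    rw [le_div_iff₀ hq₀] at h₁
    rw [div_eq_iff hq₀.ne']
    linarith
  have := hcoeff a
  rw [hfix] at this
  exact hc₁ ((mul_eq_right₀ ha).mp this.symm)

theorem smul_sub_single_mul_injective (hφ : IsExponentRescaling q φ) (hq : 1 < q) {c : K}
    (hc₀ : c ≠ 0) (hc₁ : c ≠ 1) (ν : Γ) :
    Function.Injective fun y => c • φ y - single ν 1 * y := by
  intro x y hxy
  rw [← sub_eq_zero]
  refine hφ.eq_zero_of_smul_eq_single_mul hq hc₀ hc₁ (ν := ν) ?_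
  rw [hφ.map_sub, smul_sub, mul_sub]
  exact sub_eq_sub_iff_sub_eq_sub.mp hxy

theorem smul_sub_injective (hφ : IsExponentRescaling q φ) (hq : 1 < q) {c : K}
    (hc₀ : c ≠ 0) (hc₁ : c ≠ 1) : Function.Injective fun y => c • φ y - y := by
  simpa using hφ.smul_sub_single_mul_injective hq hc₀ hc₁ 0

/-- `S = ∑_{k ≤ -1} t ^ k z ^ (q ^ k c)` satisfies
`t φ(S) = ∑_{k ≤ 0} t ^ k z ^ (q ^ k c) = S + z ^ c`. -/
theorem smul_map_sub_self_eq_single (hφ : IsExponentRescaling q φ) (hq : 1 < q) {t : K}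
    (ht : t ≠ 0) {c : Γ} (hc : c ≠ 0) {S : HahnSeries Γ K}
    (hS₁ : ∀ k : ℤ, k ≤ -1 → S.coeff (q ^ k * c) = t ^ k)
    (hS₀ : ∀ γ, (∀ k : ℤ, k ≤ -1 → γ ≠ q ^ k * c) → S.coeff γ = 0) :
    t • φ S - S = single c 1 := by
  have hq₀ : q ≠ 0 := (zero_lt_one.trans hq).ne'
  have hinj : ∀ k m : ℤ, q ^ k * c = q ^ m * c → k = m := fun k m h =>
    zpow_right_injective₀ (zero_lt_one.trans hq) hq.ne' (mul_right_cancel₀ hc h)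
  have hc_ne : ∀ k : ℤ, k ≤ -1 → c ≠ q ^ k * c := fun k hk h => by
    have := hinj 0 k (by rwa [zpow_zero, one_mul]); omega
  ext γ
  rw [coeff_sub, HahnSeries.coeff_smul, hφ, coeff_single, smul_eq_mul]
  by_cases hγ : ∃ k : ℤ, k ≤ 0 ∧ γ = q ^ k * c
  · obtain ⟨k, hk, rfl⟩ := hγ
    rw [show q ^ k * c / q = q ^ (k - 1) * c by rw [zpow_sub_one₀ hq₀]; ring,
      hS₁ (k - 1) (by omega)]
    rcases hk.lt_or_eq with hk | rfl
    · rw [hS₁ k (by omega), if_neg (hc_ne k (by omega)).symm, ← zpow_one_add₀ ht]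
      simp
    · rw [zpow_zero, one_mul, if_pos rfl, hS₀ c hc_ne, ← zpow_one_add₀ ht]
      simp
  · push Not at hγ
    have hS_div : S.coeff (γ / q) = 0 := hS₀ _ fun k hk h => hγ (k + 1) (by omega) <| by
      rw [zpow_add_one₀ hq₀, mul_right_comm, ← h]; field_simp
    rw [hS₀ γ fun k hk => hγ k (by omega), hS_div, if_neg (by simpa using hγ 0 le_rfl)]
    simp

end IsExponentRescaling

/-- Let `p ≥ 2` and `ν ∈ ℚ_{<0}`. In the field of Hahn series over `ℂ(λ)` (here
`RatFunc ℂ`, `λ = RatFunc.X`) with value group `ℚ`, the unique solution `g₂` of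
`(λφ_p − z^ν) ∘ h⁻¹ ∘ (λφ_p − 1) (g₂) = z^ν·z^{ν/(p−1)}·(λ−1)²`, where
`h = 1 + z^{−ν/(p−1)}`, is `g₂ = 1 + (λ−1)·Σ_{k ≤ −1} λ^k z^{p^k ν/(p−1)}`.
The Hahn series `S = Σ_{k ≤ −1} λ^k z^{p^k ν/(p−1)}` is specified through its
coefficients. -/
theorem mahler_example_g2 (p : ℕ) (hp : 2 ≤ p) (ν : ℚ) (hν : ν < 0)
    (φ : HahnSeries ℚ (RatFunc ℂ) → HahnSeries ℚ (RatFunc ℂ))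
    (hφ : ∀ (f : HahnSeries ℚ (RatFunc ℂ)) (γ : ℚ), (φ f).coeff γ = f.coeff (γ / p))
    (S : HahnSeries ℚ (RatFunc ℂ))
    (hS1 : ∀ k : ℤ, k ≤ -1 →
      S.coeff ((p : ℚ) ^ k * ν / ((p : ℚ) - 1)) = (RatFunc.X : RatFunc ℂ) ^ k)
    (hS0 : ∀ γ : ℚ, (∀ k : ℤ, k ≤ -1 → γ ≠ (p : ℚ) ^ k * ν / ((p : ℚ) - 1)) →
      S.coeff γ = 0) :
    let h : HahnSeries ℚ (RatFunc ℂ) := 1 + HahnSeries.single (-ν / ((p : ℚ) - 1)) 1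
    let A : HahnSeries ℚ (RatFunc ℂ) → HahnSeries ℚ (RatFunc ℂ) :=
      fun y => (RatFunc.X : RatFunc ℂ) • φ y - y
    let B : HahnSeries ℚ (RatFunc ℂ) → HahnSeries ℚ (RatFunc ℂ) :=
      fun y => (RatFunc.X : RatFunc ℂ) • φ y - HahnSeries.single ν (1 : RatFunc ℂ) * y
    let rhs : HahnSeries ℚ (RatFunc ℂ) :=
      HahnSeries.single (ν + ν / ((p : ℚ) - 1)) (((RatFunc.X : RatFunc ℂ) - 1) ^ 2)
    let g₂ : HahnSeries ℚ (RatFunc ℂ) :=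
      1 + ((RatFunc.X : RatFunc ℂ) - 1) • S
    B (h⁻¹ * A g₂) = rhs ∧ ∀ f : HahnSeries ℚ (RatFunc ℂ), B (h⁻¹ * A f) = rhs → f = g₂ := by
  intro h A B rhs g₂
  have hφ : IsExponentRescaling (p : ℚ) φ := hφ
  have hq : (1 : ℚ) < p := by exact_mod_cast hp
  have hp₀ : (p : ℚ) ≠ 0 := (zero_lt_one.trans hq).ne'
  have hp₁ : (p : ℚ) - 1 ≠ 0 := sub_ne_zero.mpr hq.ne'
  have hc : ν / ((p : ℚ) - 1) ≠ 0 := div_ne_zero hν.ne hp₁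
  have hS : RatFunc.X • φ S - S = single (ν / ((p : ℚ) - 1)) 1 :=
    hφ.smul_map_sub_self_eq_single hq RatFunc.X_ne_zero hc
      (fun k hk => by rw [← mul_div_assoc]; exact hS1 k hk)
      (fun γ hγ => hS0 γ fun k hk => by rw [mul_div_assoc]; exact hγ k hk)
  have hh : h = 1 + single (-(ν / ((p : ℚ) - 1))) 1 := by simp only [h, neg_div]
  have hh₀ : h ≠ 0 := hh ▸ one_add_single_ne_zero (neg_ne_zero.mpr hc)
  have hsol : h⁻¹ * A g₂ = single (ν / ((p : ℚ) - 1)) (RatFunc.X - 1) := by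
    rw [inv_mul_eq_iff_eq_mul₀ (G₀ := HahnSeries ℚ (RatFunc ℂ)) hh₀, hh,
      one_add_single_neg_mul_single, ← hS]
    exact hφ.smul_map_one_add_smul hp₀ _ S
  have hB : B (h⁻¹ * A g₂) = rhs := by
    rw [hsol]
    simp only [rhs, sq]
    exact hφ.smul_map_single_sub_single_mul_single hp₀ (by field_simp; ring) _ _
  refine ⟨hB, fun f hf => hφ.smul_sub_injective hq RatFunc.X_ne_zero RatFunc.X_ne_one ?_⟩
  refine mul_left_cancel₀ (inv_ne_zero hh₀) ?_
  exact hφ.smul_sub_single_mul_injective hq RatFunc.X_ne_zero RatFunc.X_ne_one ν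
    (hf.trans hB.symm)
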